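/- Let t be a semistandard Young tableau of shape λ with entries in {1,…,r}, where λ fits in the r × c rectangle, and let t° be the λ°-tableau whose column-j entries are the increasing arrangement of the complement in {1,…,r} of the column-(c+1−j) entries of t. Then the columns of t° are strictly increasing and its rows are weakly increasing, i.e., t° is semistandard. -/

import Mathlib

/-- `t` is a semistandard Young tableau of shape `λ` (row lengths `l`) with
entries in `{1, …, r}`: rows weakly increase west to east, columns strictly
increase north to south, and `t` is `0` outside the diagram. -/
def IsSSYT (l : ℕ → ℕ) (r : ℕ) (t : ℕ → ℕ → ℕ) : Prop :=
  (∀ i j, 1 ≤ i → 1 ≤ j → j ≤ l i → 1 ≤ t i j ∧ t i j ≤ r) ∧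
  (∀ i j, 1 ≤ i → 1 ≤ j → j + 1 ≤ l i → t i j ≤ t i (j + 1)) ∧
  (∀ i j, 1 ≤ i → 1 ≤ j → j ≤ l (i + 1) → t i j < t (i + 1) j) ∧
  (∀ i j, ¬(1 ≤ i ∧ 1 ≤ j ∧ j ≤ l i) → t i j = 0)

/-- `|t|`, the sum of the entries of the tableau `t` of shape `l`
(with at most `r` rows). -/
def wt (l : ℕ → ℕ) (r : ℕ) (t : ℕ → ℕ → ℕ) : ℕ :=
  ∑ i ∈ Finset.Icc 1 r, ∑ j ∈ Finset.Icc 1 (l i), t i j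

/-- The complement `λ°` of `λ` in the `r × c` rectangle: the partition
`(c - λ_r, c - λ_{r-1}, …, c - λ_1)` (trailing zeroes being irrelevant). -/
def lcomp (l : ℕ → ℕ) (r c : ℕ) : ℕ → ℕ :=
  fun i => if i ≤ r then c - l (r + 1 - i) else 0

/-- The set of entries of column `j` of the tableau `t` of shape `l`. -/
def colEntries (l : ℕ → ℕ) (r : ℕ) (t : ℕ → ℕ → ℕ) (j : ℕ) : Finset ℕ :=
  ((Finset.Icc 1 r).filter (fun i => j ≤ l i)).image (fun i => t i j)

/-- King's column-complement map `t ↦ t°`: the entries of column `j` of `t°`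
are the complement in `{1, …, r}` of the entries of column `c + 1 - j` of `t`,
arranged in increasing order from north to south. -/
def complMap (l : ℕ → ℕ) (r c : ℕ) (t : ℕ → ℕ → ℕ) : ℕ → ℕ → ℕ :=
  fun i j =>
    if 1 ≤ i ∧ 1 ≤ j ∧ j ≤ lcomp l r c i then
      (Finset.sort (Finset.Icc 1 r \ colEntries l r t (c + 1 - j)) (· ≤ ·)).getD
        (i - 1) 0
    else 0

/-!
Each column of `t°` is the increasing enumeration of a subset of `{1, …, r}`, hence strictly
increasing. It has enough entries for the shape `λ°`: the entries of a column of `t` are distinct,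
and when `j ≤ λ°ᵢ` column `c + 1 - j` of `t` has at most `r - i` cells.

Rows: since the rows of `t` weakly increase, for every `x` column `k` of `t` has at least as many
entries `≤ x` as column `k + 1`. Complementation in `{1, …, r}` reverses this comparison, and if
one set has at least as many elements `≤ x` as another for every `x`, then its `i`-th smallest
element is the smaller one.
-/

open Finset

namespace Finset

variable {α : Type*} [LinearOrder α]

theorem sort_getD_eq_orderEmbOfFin (s : Finset α) {i : ℕ} (hi : i < #s) (d : α) :
    (s.sort (· ≤ ·)).getD i d = s.orderEmbOfFin rfl ⟨i, hi⟩ := by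
  rw [orderEmbOfFin_apply, List.getD_eq_getElem?_getD, List.getElem?_eq_getElem]
  rfl

theorem orderEmbOfFin_le_iff (s : Finset α) (i : Fin #s) (x : α) :
    s.orderEmbOfFin rfl i ≤ x ↔ (i : ℕ) < #{a ∈ s | a ≤ x} := by
  set f := s.orderEmbOfFin rfl
  have hcard : #{a ∈ s | a ≤ x} = #{j | f j ≤ x} :=
    calc #{a ∈ s | a ≤ x} = #{a ∈ univ.image f | a ≤ x} := by rw [image_orderEmbOfFin_univ]
      _ = #{j | f j ≤ x} := by rw [filter_image, card_image_of_injective _ f.injective]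
  rw [hcard]
  constructor
  · intro hix
    calc (i : ℕ) < #(Iic i) := by simp
      _ ≤ #{j | f j ≤ x} := card_le_card fun j hj => by
        simpa using (f.monotone (mem_Iic.1 hj)).trans hix
  · intro hi
    by_contra! hxi
    have hsub : ({j | f j ≤ x} : Finset (Fin #s)) ⊆ Iio i := fun j hj =>
      mem_Iio.2 (f.lt_iff_lt.1 ((mem_filter.1 hj).2.trans_lt hxi))
    have := card_le_card hsub
    rw [Fin.card_Iio] at this
    omega

theorem sort_getD_le_iff (s : Finset α) {i : ℕ} (hi : i < #s) (d x : α) :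
    (s.sort (· ≤ ·)).getD i d ≤ x ↔ i < #{a ∈ s | a ≤ x} := by
  rw [sort_getD_eq_orderEmbOfFin s hi, orderEmbOfFin_le_iff]

theorem sort_getD_mem (s : Finset α) {i : ℕ} (hi : i < #s) (d : α) :
    (s.sort (· ≤ ·)).getD i d ∈ s := by
  rw [sort_getD_eq_orderEmbOfFin s hi]
  exact orderEmbOfFin_mem s rfl _

theorem sort_getD_lt_sort_getD (s : Finset α) {i j : ℕ} (hij : i < j) (hj : j < #s) (d : α) :
    (s.sort (· ≤ ·)).getD i d < (s.sort (· ≤ ·)).getD j d := by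
  rw [sort_getD_eq_orderEmbOfFin s (hij.trans hj), sort_getD_eq_orderEmbOfFin s hj]
  exact (s.orderEmbOfFin rfl).strictMono hij

theorem sort_getD_le_sort_getD_of_card_filter_le {s u : Finset α} {i : ℕ} (hs : i < #s)
    (hu : i < #u) (d : α) (h : ∀ x, #{a ∈ u | a ≤ x} ≤ #{a ∈ s | a ≤ x}) :
    (s.sort (· ≤ ·)).getD i d ≤ (u.sort (· ≤ ·)).getD i d :=
  (sort_getD_le_iff s hs d _).2 <| ((sort_getD_le_iff u hu d _).1 le_rfl).trans_le (h _)

theorem card_filter_sdiff_le_of_card_filter_le {β : Type*} [DecidableEq β]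
    {U A B : Finset β} (p : β → Prop) [DecidablePred p] (hA : A ⊆ U) (hB : B ⊆ U)
    (h : #{a ∈ A | p a} ≤ #{a ∈ B | p a}) :
    #{a ∈ U \ B | p a} ≤ #{a ∈ U \ A | p a} := by
  have hcompl : ∀ C ⊆ U, #{a ∈ U \ C | p a} + #{a ∈ C | p a} = #{a ∈ U | p a} := by
    intro C hC
    rw [← card_union_of_disjoint (disjoint_filter_filter sdiff_disjoint), ← filter_union,
      sdiff_union_of_subset hC]
  have := hcompl A hA
  have := hcompl B hB
  omega

end Finset

section Tableau

variable {l : ℕ → ℕ} {r c i j : ℕ} {t : ℕ → ℕ → ℕ}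

theorem lcomp_antitone (hl : Antitone l) (c : ℕ) : Antitone (lcomp l r c) :=
  antitone_nat_of_succ_le fun i => by
    unfold lcomp
    split_ifs <;> first | omega | exact Nat.sub_le_sub_left (hl (by omega)) c

theorem le_lcomp_iff (hj : 1 ≤ j) :
    j ≤ lcomp l r c i ↔ i ≤ r ∧ j + l (r + 1 - i) ≤ c := by
  unfold lcomp
  split_ifs <;> omega

theorem complMap_of_le_lcomp (hi : 1 ≤ i) (hj : 1 ≤ j) (h : j ≤ lcomp l r c i) :
    complMap l r c t i j =
      ((Icc 1 r \ colEntries l r t (c + 1 - j)).sort (· ≤ ·)).getD (i - 1) 0 :=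
  if_pos ⟨hi, hj, h⟩

namespace IsSSYT

theorem strictMonoOn_column (ht : IsSSYT l r t) (hl : Antitone l) (hj : 1 ≤ j) :
    StrictMonoOn (t · j) {i | 1 ≤ i ∧ j ≤ l i} := by
  rintro i ⟨hi, -⟩ i' ⟨-, hji'⟩ hii'
  induction i', hii' using Nat.le_induction with
  | base => exact ht.2.2.1 i j hi hj hji'
  | succ n hn ih =>
    exact (ih (hji'.trans (hl n.le_succ))).trans (ht.2.2.1 n j (by omega) hj hji')

theorem colEntries_subset (ht : IsSSYT l r t) (hj : 1 ≤ j) :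
    colEntries l r t j ⊆ Icc 1 r := by
  intro a ha
  obtain ⟨i, hi, rfl⟩ := mem_image.1 ha
  rw [mem_filter, mem_Icc] at hi
  exact mem_Icc.2 (ht.1 i j hi.1.1 hj hi.2)

theorem card_colEntries (ht : IsSSYT l r t) (hl : Antitone l) (hj : 1 ≤ j) :
    #(colEntries l r t j) = #{i ∈ Icc 1 r | j ≤ l i} :=
  card_image_of_injOn <| (ht.strictMonoOn_column hl hj).injOn.mono fun i hi => by
    simp only [coe_filter, mem_Icc, Set.mem_ofPred_eq] at hi
    exact ⟨hi.1.1, hi.2⟩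

theorem card_filter_colEntries_succ_le (ht : IsSSYT l r t) (hl : Antitone l)
    (hj : 1 ≤ j) (x : ℕ) :
    #{a ∈ colEntries l r t (j + 1) | a ≤ x} ≤ #{a ∈ colEntries l r t j | a ≤ x} := by
  simp only [colEntries, filter_image, filter_filter]
  refine card_image_le.trans ((card_le_card fun i hi => ?_).trans (card_image_of_injOn ?_).ge)
  · simp only [mem_filter, mem_Icc] at hi ⊢
    exact ⟨hi.1, by omega, (ht.2.1 i j hi.1.1 hj hi.2.1).trans hi.2.2⟩
  · refine (ht.strictMonoOn_column hl hj).injOn.mono fun i hi => ?_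
    simp only [coe_filter, mem_Icc, Set.mem_ofPred_eq] at hi
    exact ⟨hi.1.1, hi.2.1⟩

theorem le_card_sdiff_colEntries (ht : IsSSYT l r t) (hl : Antitone l) (hj : 1 ≤ j)
    (h : j ≤ lcomp l r c i) :
    i ≤ #(Icc 1 r \ colEntries l r t (c + 1 - j)) := by
  obtain ⟨hir, hjc⟩ := (le_lcomp_iff hj).1 h
  have hrows : {k ∈ Icc 1 r | c + 1 - j ≤ l k} ⊆ Icc 1 (r - i) := fun k hk => by
    rw [mem_filter, mem_Icc] at hk
    rw [mem_Icc]
    by_contra hk'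
    have := hl (show r + 1 - i ≤ k by omega)
    omega
  have := card_le_card hrows
  rw [card_sdiff_of_subset (ht.colEntries_subset (by omega)), ht.card_colEntries hl (by omega),
    Nat.card_Icc]
  rw [Nat.card_Icc] at this
  omega

theorem complMap_mem_Icc (ht : IsSSYT l r t) (hl : Antitone l) (hi : 1 ≤ i) (hj : 1 ≤ j)
    (h : j ≤ lcomp l r c i) :
    complMap l r c t i j ∈ Icc 1 r := by
  have := ht.le_card_sdiff_colEntries hl hj h
  rw [complMap_of_le_lcomp hi hj h]
  exact (mem_sdiff.1 (sort_getD_mem _ (by omega) 0)).1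

theorem complMap_lt_complMap_succ_row (ht : IsSSYT l r t) (hl : Antitone l)
    (hi : 1 ≤ i) (hj : 1 ≤ j) (h : j ≤ lcomp l r c (i + 1)) :
    complMap l r c t i j < complMap l r c t (i + 1) j := by
  have h' : j ≤ lcomp l r c i := h.trans (lcomp_antitone hl c i.le_succ)
  have := ht.le_card_sdiff_colEntries hl hj h
  rw [complMap_of_le_lcomp hi hj h', complMap_of_le_lcomp (by omega) hj h]
  exact sort_getD_lt_sort_getD _ (by omega) (by omega) 0

theorem complMap_le_complMap_succ_col (ht : IsSSYT l r t) (hl : Antitone l)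
    (hi : 1 ≤ i) (hj : 1 ≤ j) (h : j + 1 ≤ lcomp l r c i) :
    complMap l r c t i j ≤ complMap l r c t i (j + 1) := by
  have h' : j ≤ lcomp l r c i := by omega
  have hjc := ((le_lcomp_iff (by omega : 1 ≤ j + 1)).1 h).2
  have hcard := ht.le_card_sdiff_colEntries hl hj h'
  have hcard' := ht.le_card_sdiff_colEntries hl (by omega) h
  have hcol : c + 1 - j = c - j + 1 := by omega
  rw [complMap_of_le_lcomp hi hj h', complMap_of_le_lcomp hi (by omega) h]
  rw [show c + 1 - (j + 1) = c - j by omega] at hcard' ⊢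
  refine sort_getD_le_sort_getD_of_card_filter_le (by omega) (by omega) 0 fun x =>
    card_filter_sdiff_le_of_card_filter_le _ (ht.colEntries_subset (by omega))
      (ht.colEntries_subset (by omega)) ?_
  rw [hcol]
  exact ht.card_filter_colEntries_succ_le hl (by omega) x

end IsSSYT

end Tableau

theorem complMap_semistandard_general (r c : ℕ)
    (l : ℕ → ℕ)
    (hA : ∀ i, l (i + 1) ≤ l i)
    (t : ℕ → ℕ → ℕ) (ht : IsSSYT l r t) :
    IsSSYT (lcomp l r c) r (complMap l r c t) := by
  have hl : Antitone l := antitone_nat_of_succ_le hA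
  exact ⟨fun i j hi hj h => mem_Icc.1 (ht.complMap_mem_Icc hl hi hj h),
    fun i j hi hj h => ht.complMap_le_complMap_succ_col hl hi hj h,
    fun i j hi hj h => ht.complMap_lt_complMap_succ_row hl hi hj h,
    fun i j h => if_neg h⟩

/-- **The column complement of a semistandard tableau is semistandard.** If
`t ∈ SSYT_r(λ)` with `λ` inside the `r × c` rectangle, then the tableau `t°`
of shape `λ°`, whose column-`j` entries are the increasing arrangement of the
complement in `{1, …, r}` of the column-`(c+1-j)` entries of `t`, has strictly
increasing columns and weakly increasing rows, i.e. `t°` is semistandard. -/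
theorem complMap_semistandard (r c : ℕ) (hr0 : 0 < r) (hc0 : 0 < c)
    (l : ℕ → ℕ)
    (hA : ∀ i, l (i + 1) ≤ l i) (hr : ∀ i, r < i → l i = 0) (hc : ∀ i, l i ≤ c)
    (t : ℕ → ℕ → ℕ) (ht : IsSSYT l r t) :
    IsSSYT (lcomp l r c) r (complMap l r c t) :=
  complMap_semistandard_general r c l hA t ht
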